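/- On the open cone {(δ, β, ζ) ∈ ℝ³ : δ > 0 and δ² − β² − ζ² > 0}, the stochastic Hamiltonian of the Poincaré plane, 𝓗(δ, β, ζ) = √(δ² − β² − ζ²) + (1/2) log(δ² − β² − ζ²) − log π, satisfies the Legendre/Euler identity 𝓗 − δ ∂𝓗/∂δ − β ∂𝓗/∂β − ζ ∂𝓗/∂ζ = (1/2)( log((δ² − β² − ζ²)/π²) − 2 ), so that the Shannon information of the Gibbs state equals 𝓘 = (1/2)(log((δ² − β² − ζ²)/π²) − 2). -/

import Mathlib

/-- The stochastic Hamiltonian of the Poincaré plane in the generalized temperatures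
`(δ, β, ζ)`: `𝓗 = √(δ²−β²−ζ²) + ½ log(δ²−β²−ζ²) − log π`. -/
noncomputable def Hsto (d b z : ℝ) : ℝ :=
  Real.sqrt (d^2 - b^2 - z^2) + (1/2) * Real.log (d^2 - b^2 - z^2) - Real.log Real.pi

/-!
`𝓗 = g(Q)` with `g q = √q + ½ log q − log π` and `Q = δ² − β² − ζ²` a quadratic form. By Euler's
relation for the degree-2 homogeneous `Q`, `Σ λⁱ ∂ᵢ𝓗 = 2Q g'(Q) = √Q + 1`, and subtracting this
from `𝓗` leaves `½ log Q − log π − 1`.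
-/

open Real

theorem HasDerivAt.sqrt_add_half_log {f : ℝ → ℝ} {f' x : ℝ} (hf : HasDerivAt f f' x)
    (hx : 0 < f x) :
    HasDerivAt (fun y => √(f y) + 1 / 2 * Real.log (f y)) (f' * (√(f x) + 1) / (2 * f x)) x := by
  refine ((hf.sqrt hx.ne').add ((hf.log hx.ne').const_mul (1 / 2))).congr_deriv ?_
  have hs : √(f x) ≠ 0 := (sqrt_pos.mpr hx).ne'
  field_simp
  linear_combination -f' * mul_self_sqrt hx.le

section

variable {d b z : ℝ}

theorem hasDerivAt_Hsto_fst (h : 0 < d^2 - b^2 - z^2) :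
    HasDerivAt (fun t => Hsto t b z)
      (2 * d * (√(d^2 - b^2 - z^2) + 1) / (2 * (d^2 - b^2 - z^2))) d := by
  have hQ : HasDerivAt (fun t => t^2 - b^2 - z^2) (2 * d) d := by
    simpa using ((hasDerivAt_pow 2 d).sub_const (b^2)).sub_const (z^2)
  exact (hQ.sqrt_add_half_log h).sub_const (log π)

theorem hasDerivAt_Hsto_snd (h : 0 < d^2 - b^2 - z^2) :
    HasDerivAt (fun t => Hsto d t z)
      (-(2 * b) * (√(d^2 - b^2 - z^2) + 1) / (2 * (d^2 - b^2 - z^2))) b := by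
  have hQ : HasDerivAt (fun t => d^2 - t^2 - z^2) (-(2 * b)) b := by
    simpa using ((hasDerivAt_pow 2 b).const_sub (d^2)).sub_const (z^2)
  exact (hQ.sqrt_add_half_log h).sub_const (log π)

theorem hasDerivAt_Hsto_thd (h : 0 < d^2 - b^2 - z^2) :
    HasDerivAt (fun t => Hsto d b t)
      (-(2 * z) * (√(d^2 - b^2 - z^2) + 1) / (2 * (d^2 - b^2 - z^2))) z := by
  have hQ : HasDerivAt (fun t => d^2 - b^2 - t^2) (-(2 * z)) z := by
    simpa using (hasDerivAt_pow 2 z).const_sub (d^2 - b^2)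
  exact (hQ.sqrt_add_half_log h).sub_const (log π)

theorem euler_Hsto (h : 0 < d^2 - b^2 - z^2) :
    d * deriv (fun t => Hsto t b z) d + b * deriv (fun t => Hsto d t z) b
        + z * deriv (fun t => Hsto d b t) z = √(d^2 - b^2 - z^2) + 1 := by
  rw [(hasDerivAt_Hsto_fst h).deriv, (hasDerivAt_Hsto_snd h).deriv,
    (hasDerivAt_Hsto_thd h).deriv]
  field_simp
  ring

end

theorem stmt_9_general (d b z : ℝ) (hcone : 0 < d^2 - b^2 - z^2) :
    Hsto d b z - d * deriv (fun t => Hsto t b z) d - b * deriv (fun t => Hsto d t z) b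
        - z * deriv (fun t => Hsto d b t) z
      = (1/2) * (Real.log ((d^2 - b^2 - z^2) / Real.pi^2) - 2) := by
  rw [log_div hcone.ne' (by positivity), log_pow, Hsto]
  linear_combination -euler_Hsto hcone

/-- On the cone `δ > 0`, `δ² − β² − ζ² > 0`, the stochastic Hamiltonian of the Poincaré plane
satisfies the Legendre/Euler identity
`𝓗 − δ ∂𝓗/∂δ − β ∂𝓗/∂β − ζ ∂𝓗/∂ζ = ½(log((δ²−β²−ζ²)/π²) − 2)`, so that the Shannon
information of the Gibbs state equals `𝓘 = ½(log((δ²−β²−ζ²)/π²) − 2)`. -/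
theorem stmt_9 (d b z : ℝ) (hd : 0 < d) (hcone : 0 < d^2 - b^2 - z^2) :
    Hsto d b z - d * deriv (fun t => Hsto t b z) d - b * deriv (fun t => Hsto d t z) b
        - z * deriv (fun t => Hsto d b t) z
      = (1/2) * (Real.log ((d^2 - b^2 - z^2) / Real.pi^2) - 2) :=
  stmt_9_general d b z hcone
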